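/- (Type C straightening, dominance part.) With v_β as in the type C setting (v_β = det(e_{β_i-(i+j)} - e_{β_i-(i-j)}), e_k elementary symmetric in x₁^{±1},…,x_n^{±1}, e_k = 0 outside {0,…,2n}) and the dot action w ∘ β = w(β+δ) - δ with δ = (-n-1,…,-n-m): if v_β ≠ 0 then there exist a partition γ = (γ₁ ≥ ⋯ ≥ γ_m ≥ 0) with γ₁ ≤ n and w in the type C_m Weyl group, such that w ∘ β = γ and v_β = ε(w)·v_γ. -/

import Mathlib

/- STATEMENT 10 (Type C straightening, dominance part): if v_β ≠ 0 then there
exist a partition γ (antitone, 0 ≤ γ_i ≤ n) and an element w of the type C_m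
Weyl group (a signed permutation (σ,s)) with w ∘ β = γ and v_β = ε(w)·v_γ. -/

open scoped Classical

abbrev Lau (n : ℕ) := AddMonoidAlgebra ℤ (Fin n → ℤ)

noncomputable def mono {n : ℕ} (β : Fin n → ℤ) : Lau n := AddMonoidAlgebra.single β 1

noncomputable def xv (n : ℕ) : Fin n ⊕ Fin n → Lau n
  | Sum.inl i => mono (Pi.single i (1 : ℤ))
  | Sum.inr i => mono (Pi.single i (-1 : ℤ))

/-- `e_k` in the 2n variables x₁,…,x_n,x₁^{-1},…,x_n^{-1}. -/
noncomputable def eC (n : ℕ) (k : ℤ) : Lau n :=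
  if 0 ≤ k then
    ∑ S ∈ (Finset.univ : Finset (Fin n ⊕ Fin n)).powersetCard k.toNat, ∏ a ∈ S, xv n a
  else 0

/-- The type C Jacobi–Trudi determinant `v_β = det(e_{β_i-(i+j)} - e_{β_i-(i-j)})`. -/
noncomputable def vC (n m : ℕ) (β : Fin m → ℤ) : Lau n :=
  Matrix.det (Matrix.of fun i j : Fin m =>
    eC n (β i - (((i : ℤ) + 1) + ((j : ℤ) + 1))) - eC n (β i - (((i : ℤ) + 1) - ((j : ℤ) + 1))))

/-- A signed permutation (σ, s) acting on ℤ^m: `(w·x)_i = ±x_{σ⁻¹(i)}`. -/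
def act {m : ℕ} (σ : Equiv.Perm (Fin m)) (s : Fin m → Bool) (x : Fin m → ℤ) : Fin m → ℤ :=
  fun i => (if s i then -1 else 1) * x (σ⁻¹ i)

/-- The sign ε(w) of the signed permutation w = (σ, s). -/
noncomputable def sgn {m : ℕ} (σ : Equiv.Perm (Fin m)) (s : Fin m → Bool) : ℤ :=
  (Equiv.Perm.sign σ : ℤ) * ∏ i, (if s i then (-1 : ℤ) else 1)

/-- δ = (-n-1, -n-2, …, -n-m). -/
def deltaC (n m : ℕ) (i : Fin m) : ℤ := -(n : ℤ) - 1 - i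

/-- The dot action `w ∘ β = w(β + δ) - δ` of the hyperoctahedral group. -/
def dotC (n m : ℕ) (σ : Equiv.Perm (Fin m)) (s : Fin m → Bool) (β : Fin m → ℤ) : Fin m → ℤ :=
  fun i => act σ s (fun t => β t + deltaC n m t) i - deltaC n m i

-- basics
lemma mono_mul {n : ℕ} (a b : Fin n → ℤ) : mono a * mono b = mono (a + b) := by
  simp [mono, AddMonoidAlgebra.single_mul_single]

lemma mono_prod {n : ℕ} {α : Type*} (S : Finset α) (f : α → (Fin n → ℤ)) :
    ∏ a ∈ S, mono (f a) = mono (∑ a ∈ S, f a) := by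
  classical
  induction S using Finset.induction with
  | empty => simp [mono, AddMonoidAlgebra.one_def]
  | @insert x S h ih => rw [Finset.prod_insert h, Finset.sum_insert h, ih, mono_mul]

def ev (n : ℕ) : Fin n ⊕ Fin n → (Fin n → ℤ) :=
  Sum.elim (fun i => Pi.single i 1) (fun i => Pi.single i (-1))

lemma pi_single_neg {n : ℕ} (i : Fin n) :
    (Pi.single i (-1 : ℤ) : Fin n → ℤ) = - (Pi.single i (1 : ℤ) : Fin n → ℤ) := by
  funext j; simp [Pi.single_apply, apply_ite Neg.neg]

lemma xv_eq (n : ℕ) (a : Fin n ⊕ Fin n) : xv n a = mono (ev n a) := by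
  cases a <;> rfl

lemma ev_swap (n : ℕ) (a : Fin n ⊕ Fin n) :
    ev n (Equiv.sumComm (Fin n) (Fin n) a) = - ev n a := by
  cases a <;> simp [ev, Equiv.sumComm, pi_single_neg]

lemma ev_univ (n : ℕ) : ∑ a : Fin n ⊕ Fin n, ev n a = 0 := by
  rw [Fintype.sum_sum_type]
  simp only [ev, Sum.elim_inl, Sum.elim_inr, pi_single_neg]
  simp

lemma card_univ_sum (n : ℕ) :
    (Finset.univ : Finset (Fin n ⊕ Fin n)).card = 2 * n := by
  simp [Fintype.card_sum]; ring

lemma eC_neg (n : ℕ) {k : ℤ} (hk : k < 0) : eC n k = 0 := if_neg (not_le.mpr hk)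

lemma eC_gt (n : ℕ) {k : ℤ} (hk : 2*(n:ℤ) < k) : eC n k = 0 := by
  have h0 : (0:ℤ) ≤ k := le_of_lt (lt_of_le_of_lt (by positivity) hk)
  rw [eC, if_pos h0]
  have he : (Finset.univ : Finset (Fin n ⊕ Fin n)).powersetCard k.toNat = ∅ := by
    rw [Finset.powersetCard_eq_empty, card_univ_sum]; omega
  simp [he]

lemma map_swap_swap {n : ℕ} (T : Finset (Fin n ⊕ Fin n)) :
    (T.map (Equiv.sumComm (Fin n) (Fin n)).toEmbedding).map
      (Equiv.sumComm (Fin n) (Fin n)).toEmbedding = T := by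
  ext a; simp [Finset.mem_map_equiv]

lemma eC_dual (n : ℕ) (k : ℤ) : eC n (2*(n:ℤ) - k) = eC n k := by
  rcases lt_or_ge k 0 with hk | hk
  · rw [eC_neg n hk, eC_gt n (by omega)]
  rcases lt_or_ge (2*(n:ℤ)) k with hk2 | hk2
  · rw [eC_gt n hk2, eC_neg n (by omega)]
  rw [eC, eC, if_pos hk, if_pos (by omega : (0:ℤ) ≤ 2*(n:ℤ) - k)]
  set ι := (Equiv.sumComm (Fin n) (Fin n)).toEmbedding with hι
  refine Finset.sum_nbij' (i := fun S => (Sᶜ).map ι) (j := fun T => (T.map ι)ᶜ)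
    ?_ ?_ ?_ ?_ ?_
  · intro S hS
    rw [Finset.mem_powersetCard_univ] at hS ⊢
    rw [Finset.card_map, Finset.card_compl, hS, Fintype.card_sum, Fintype.card_fin]
    omega
  · intro T hT
    rw [Finset.mem_powersetCard_univ] at hT ⊢
    rw [Finset.card_compl, Finset.card_map, hT, Fintype.card_sum, Fintype.card_fin]
    omega
  · intro S _; simp only [hι]; rw [map_swap_swap, compl_compl]
  · intro T _; simp only [hι]; rw [compl_compl, map_swap_swap]
  · intro S _
    simp only [xv_eq, mono_prod]
    congr 1
    rw [Finset.sum_map]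
    simp only [hι, Equiv.coe_toEmbedding, ev_swap, Finset.sum_neg_distrib]
    have h := Finset.sum_add_sum_compl S (ev n)
    rw [ev_univ] at h
    exact eq_neg_of_add_eq_zero_left h

noncomputable def Rrow (n : ℕ) {m : ℕ} (c : ℤ) : Fin m → Lau n :=
  fun j => eC n (c - ((j:ℤ)+1)) - eC n (c + ((j:ℤ)+1))

lemma vC_eq (n m : ℕ) (β : Fin m → ℤ) :
    vC n m β = Matrix.det (Matrix.of fun i j : Fin m => Rrow n (β i - ((i:ℤ)+1)) j) := by
  unfold vC Rrow
  congr 1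
  ext i j
  simp only [Matrix.of_apply]
  congr 2 <;> ring_nf

lemma Rrow_flip (n m : ℕ) (c : ℤ) : Rrow n (m := m) (2*(n:ℤ) - c) = - Rrow n c := by
  funext j
  show eC n (2*(n:ℤ) - c - ((j:ℤ)+1)) - eC n (2*(n:ℤ) - c + ((j:ℤ)+1))
      = -(eC n (c - ((j:ℤ)+1)) - eC n (c + ((j:ℤ)+1)))
  have h1 : 2*(n:ℤ) - c - ((j:ℤ)+1) = 2*(n:ℤ) - (c + ((j:ℤ)+1)) := by ring
  have h2 : 2*(n:ℤ) - c + ((j:ℤ)+1) = 2*(n:ℤ) - (c - ((j:ℤ)+1)) := by ring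
  rw [h1, h2, eC_dual, eC_dual]; ring

lemma Rrow_center (n m : ℕ) (j : Fin m) : Rrow n ((n:ℤ)) j = 0 := by
  show eC n ((n:ℤ) - ((j:ℤ)+1)) - eC n ((n:ℤ) + ((j:ℤ)+1)) = 0
  have h : (n:ℤ) - ((j:ℤ)+1) = 2*(n:ℤ) - ((n:ℤ) + ((j:ℤ)+1)) := by ring
  rw [h, eC_dual, sub_self]

lemma Rrow_zero_hi (n : ℕ) {m : ℕ} {c : ℤ} {j : Fin m} (h : 2*(n:ℤ) < c - ((j:ℤ)+1)) :
    Rrow n c j = 0 := by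
  show eC n (c - ((j:ℤ)+1)) - eC n (c + ((j:ℤ)+1)) = 0
  have hj : (0:ℤ) ≤ (j:ℤ) := Int.ofNat_nonneg _
  rw [eC_gt n h, eC_gt n (by omega), sub_self]

lemma Rrow_zero_lo (n : ℕ) {m : ℕ} {c : ℤ} {j : Fin m} (h : c + ((j:ℤ)+1) < 0) :
    Rrow n c j = 0 := by
  show eC n (c - ((j:ℤ)+1)) - eC n (c + ((j:ℤ)+1)) = 0
  have hj : (0:ℤ) ≤ (j:ℤ) := Int.ofNat_nonneg _
  rw [eC_neg n h, eC_neg n (by omega), sub_self]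

lemma det_row_neg {R : Type*} [CommRing R] {m : ℕ} (A : Matrix (Fin m) (Fin m) R)
    (i k : Fin m) (hik : i ≠ k) (h : A i = - A k) : A.det = 0 := by
  have h1 : (A.updateRow i (A i + A k)).det
      = (A.updateRow i (A i)).det + (A.updateRow i (A k)).det :=
    Matrix.det_updateRow_add A i (A i) (A k)
  have h2 : (A.updateRow i (A i + A k)).det = 0 := by
    apply Matrix.det_eq_zero_of_row_eq_zero i
    intro j
    rw [Matrix.updateRow_self]
    rw [h]; simp
  have h3 : (A.updateRow i (A k)).det = 0 := by
    apply Matrix.det_zero_of_row_eq hik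
    rw [Matrix.updateRow_self, Matrix.updateRow_ne (Ne.symm hik)]
  rw [Matrix.updateRow_eq_self] at h1
  rw [h2, h3, add_zero] at h1
  exact h1.symm

lemma det_support {R : Type*} [CommRing R] {m : ℕ} (A : Matrix (Fin m) (Fin m) R)
    (I J : Finset (Fin m)) (hc : J.card < I.card)
    (h : ∀ i ∈ I, ∀ j ∉ J, A i j = 0) : A.det = 0 := by
  rw [Matrix.det_apply]
  apply Finset.sum_eq_zero
  intro σ _
  have hex : ∃ j, j ∉ J ∧ σ j ∈ I := by
    by_contra hcon
    push_neg at hcon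
    have hsub : I.image (⇑σ⁻¹) ⊆ J := by
      intro j hj
      obtain ⟨x, hx, rfl⟩ := Finset.mem_image.mp hj
      by_contra hjJ
      exact (hcon _ hjJ) (by simpa using hx)
    have := Finset.card_le_card hsub
    rw [Finset.card_image_of_injective _ (Equiv.injective _)] at this
    omega
  obtain ⟨j, hjJ, hjI⟩ := hex
  have : ∏ x, A (σ x) x = 0 :=
    Finset.prod_eq_zero (Finset.mem_univ j) (h _ hjI _ hjJ)
  rw [this, smul_zero]

lemma sm_step {m : ℕ} (g : Fin m → ℤ) (hg : StrictMono g) :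
    ∀ (k : ℕ) (i : Fin m) (h : i.val + k < m), g i + k ≤ g ⟨i.val + k, h⟩ := by
  intro k
  induction k with
  | zero => intro i h; simp
  | succ k ih =>
      intro i h
      have hk : i.val + k < m := by omega
      have h1 := ih i hk
      have h2 : g ⟨i.val + k, hk⟩ < g ⟨i.val + (k+1), h⟩ := by
        apply hg
        simp [Fin.lt_def]
      push_cast
      omega

theorem stmt10 (n m : ℕ) (hn : 1 ≤ n) (hm : 1 ≤ m) (β : Fin m → ℤ)
    (hβ : vC n m β ≠ 0) :
    ∃ (γ : Fin m → ℤ) (σ : Equiv.Perm (Fin m)) (s : Fin m → Bool),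
      Antitone γ ∧ (∀ i, 0 ≤ γ i ∧ γ i ≤ n) ∧
      dotC n m σ s β = γ ∧ vC n m β = sgn σ s • vC n m γ := by
  classical
  set a : Fin m → ℤ := fun i => β i - ((i:ℤ)+1) - n with ha_def
  have hv : vC n m β = Matrix.det (Matrix.of fun i j : Fin m => Rrow n (a i + n) j) := by
    rw [vC_eq]
    congr 1; ext i j
    simp only [Matrix.of_apply, ha_def]
    ring_nf
  -- Step 1: a i ≠ 0
  have ha0 : ∀ i, a i ≠ 0 := by
    intro i h
    apply hβ
    rw [hv]
    apply Matrix.det_eq_zero_of_row_eq_zero i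
    intro j
    simp only [Matrix.of_apply, h, zero_add]
    exact Rrow_center n m j
  -- Step 2: |a| injective
  have hinj : Function.Injective (fun i => |a i|) := by
    intro i k h
    by_contra hik
    apply hβ
    rw [hv]
    rcases abs_eq_abs.mp h with h1 | h1
    · apply Matrix.det_zero_of_row_eq hik
      funext j
      simp only [Matrix.of_apply, h1]
    · apply det_row_neg _ i k hik
      funext j
      have hc : a i + n = 2*(n:ℤ) - (a k + n) := by rw [h1]; ring
      simp only [Matrix.of_apply, hc]
      rw [Rrow_flip]
      simp
  set d : Fin m → ℤ := fun i => |a i| with hd_def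
  have hd1 : ∀ i, 1 ≤ d i := fun i => Int.one_le_abs (ha0 i)
  set τ : Equiv.Perm (Fin m) := Tuple.sort d with hτ_def
  have hmono : Monotone (d ∘ τ) := Tuple.monotone_sort d
  have hsm : StrictMono (d ∘ τ) := hmono.strictMono_of_injective (hinj.comp τ.injective)
  have h0m : 0 < m := hm
  -- lower bound
  have hlb : ∀ i : Fin m, (i:ℤ) + 1 ≤ d (τ i) := by
    intro i
    have h := sm_step (d ∘ τ) hsm i.val ⟨0, h0m⟩ (by simpa using i.isLt)
    have he : (⟨(0:ℕ) + i.val, by simpa using i.isLt⟩ : Fin m) = i := by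
      apply Fin.ext; simp
    rw [he] at h
    have := hd1 (τ ⟨0, h0m⟩)
    simp only [Function.comp_apply] at h
    omega
  -- upper bound
  have hub : ∀ i : Fin m, d (τ i) ≤ (n:ℤ) + (i:ℤ) + 1 := by
    by_contra hcon
    push_neg at hcon
    obtain ⟨i₀, hi₀⟩ := hcon
    apply hβ
    rw [hv]
    apply det_support _ ((Finset.Ici i₀).image τ) (Finset.Ioi i₀)
    · rw [Finset.card_image_of_injective _ τ.injective, Fin.card_Ici, Fin.card_Ioi]
      have := i₀.isLt
      omega
    · intro i hi j hj
      obtain ⟨k, hk, rfl⟩ := Finset.mem_image.mp hi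
      rw [Finset.mem_Ici] at hk
      rw [Finset.mem_Ioi, not_lt] at hj
      have hdk : (n:ℤ) + (i₀:ℤ) + 2 ≤ d (τ k) := by
        have := hmono hk
        simp only [Function.comp_apply] at this
        omega
      have hjle : (j:ℤ) ≤ (i₀:ℤ) := by exact_mod_cast hj
      simp only [Matrix.of_apply]
      rcases lt_trichotomy (a (τ k)) 0 with hneg | hzero | hpos
      · have : a (τ k) = -d (τ k) := by
          simp only [hd_def]; rw [abs_of_neg hneg]; ring
        apply Rrow_zero_lo
        omega
      · exact absurd hzero (ha0 _)
      · have : a (τ k) = d (τ k) := by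
          simp only [hd_def]; rw [abs_of_pos hpos]
        apply Rrow_zero_hi
        omega
  -- define γ, σ, s
  refine ⟨fun i => (n:ℤ) + 1 + (i:ℤ) - d (τ i), τ⁻¹, fun i => decide (0 < a (τ i)),
    ?_, ?_, ?_, ?_⟩
  · -- Antitone
    intro i j hij
    have hk : i.val + (j.val - i.val) < m := by
      have := j.isLt; have : i.val ≤ j.val := hij; omega
    have h := sm_step (d ∘ τ) hsm (j.val - i.val) i hk
    have he : (⟨i.val + (j.val - i.val), hk⟩ : Fin m) = j := by
      apply Fin.ext
      have : i.val ≤ j.val := hij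
      simp; omega
    rw [he] at h
    simp only [Function.comp_apply] at h
    have hji : ((j.val - i.val : ℕ) : ℤ) = (j:ℤ) - (i:ℤ) := by
      have : i.val ≤ j.val := hij
      push_cast [Nat.cast_sub this]; ring
    rw [hji] at h
    simp only
    omega
  · -- bounds
    intro i
    have h1 := hub i
    have h2 := hlb i
    constructor
    · show (0:ℤ) ≤ (n:ℤ) + 1 + (i:ℤ) - d (τ i)
      omega
    · show (n:ℤ) + 1 + (i:ℤ) - d (τ i) ≤ (n:ℤ)
      omega
  · -- dot action
    funext i
    simp only [dotC, act, deltaC, inv_inv]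
    have hseq : β (τ i) + (-(n:ℤ) - 1 - (τ i : ℤ)) = a (τ i) := by
      simp only [ha_def]; ring
    rw [hseq]
    by_cases hpos : 0 < a (τ i)
    · rw [if_pos (by simpa using hpos)]
      have : d (τ i) = a (τ i) := by simp only [hd_def]; rw [abs_of_pos hpos]
      rw [this]; ring
    · rw [if_neg (by simpa using hpos)]
      have hneg : a (τ i) < 0 := lt_of_le_of_ne (not_lt.mp hpos) (ha0 _)
      have : d (τ i) = -a (τ i) := by simp only [hd_def]; rw [abs_of_neg hneg]
      rw [this]; ring
  · -- determinant identity
    set sp : Fin m → ℤ := fun i => if 0 < a i then 1 else -1 with hsp_def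
    set N : Matrix (Fin m) (Fin m) (Lau n) :=
      Matrix.of (fun i j => Rrow n (d i + n) j) with hN_def
    have e1 : vC n m β = (((∏ i, sp i : ℤ) : ℤ) : Lau n) * N.det := by
      rw [hv]
      have hM : (Matrix.of fun i j : Fin m => Rrow n (a i + n) j)
          = Matrix.of fun i j => ((sp i : ℤ) : Lau n) * N i j := by
        ext i j
        simp only [Matrix.of_apply, hN_def]
        by_cases hpos : 0 < a i
        · have hdi : d i = a i := by simp only [hd_def]; rw [abs_of_pos hpos]
          rw [hdi]
          simp [hsp_def, hpos]
        · have hneg : a i < 0 := lt_of_le_of_ne (not_lt.mp hpos) (ha0 _)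
          have hc : a i + n = 2*(n:ℤ) - (d i + n) := by
            simp only [hd_def]; rw [abs_of_neg hneg]; ring
          rw [hc, Rrow_flip]
          simp [hsp_def, hpos]
      rw [hM, Matrix.det_mul_column]
      congr 1
      rw [Int.cast_prod]
    have e2 : vC n m (fun i => (n:ℤ) + 1 + (i:ℤ) - d (τ i))
        = ((-1 : Lau n))^m * (((Equiv.Perm.sign τ : ℤ) : Lau n)) * N.det := by
      rw [vC_eq]
      have hM : (Matrix.of fun i j : Fin m =>
            Rrow n ((fun i : Fin m => (n:ℤ) + 1 + (i:ℤ) - d (τ i)) i - ((i:ℤ)+1)) j)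
          = - (N.submatrix τ id) := by
        ext i j
        simp only [Matrix.of_apply, Matrix.submatrix_apply, Matrix.neg_apply, id_eq, hN_def]
        have hc : (n:ℤ) + 1 + (i:ℤ) - d (τ i) - ((i:ℤ)+1) = 2*(n:ℤ) - (d (τ i) + n) := by
          ring
        rw [hc, Rrow_flip]
        simp
      rw [hM, Matrix.det_neg, Matrix.det_permute]
      simp only [Fintype.card_fin]
      ring
    have hsgn : sgn τ⁻¹ (fun i => decide (0 < a (τ i)))
        = (Equiv.Perm.sign τ : ℤ) * ((-1)^m * ∏ i, sp i) := by
      unfold sgn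
      rw [Equiv.Perm.sign_inv]
      congr 1
      have hterm : ∀ i : Fin m,
          (if (decide (0 < a (τ i))) = true then (-1:ℤ) else 1) = -(sp (τ i)) := by
        intro i
        by_cases h : 0 < a (τ i) <;> simp [hsp_def, h]
      rw [Finset.prod_congr rfl (fun i _ => hterm i)]
      have : ∀ i : Fin m, -(sp (τ i)) = (-1) * sp (τ i) := fun i => by ring
      rw [Finset.prod_congr rfl (fun i _ => this i), Finset.prod_mul_distrib,
        Finset.prod_const, Finset.card_univ, Fintype.card_fin, Equiv.prod_comp τ sp]
    rw [e1, e2, hsgn, zsmul_eq_mul]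
    have hQ : ((-1 : Lau n))^m * ((-1 : Lau n))^m = 1 := by
      rw [← mul_pow]; simp
    have hS : (((Equiv.Perm.sign τ : ℤ) : Lau n)) * (((Equiv.Perm.sign τ : ℤ) : Lau n)) = 1 := by
      rcases Int.units_eq_one_or (Equiv.Perm.sign τ) with hs | hs <;> rw [hs] <;> norm_num
    have hc : ((((Equiv.Perm.sign τ : ℤ) * ((-1)^m * ∏ i, sp i) : ℤ)) : Lau n)
        = (((Equiv.Perm.sign τ : ℤ) : Lau n)) * ((-1 : Lau n))^m * (((∏ i, sp i : ℤ) : ℤ) : Lau n) := by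
      push_cast
      ring
    rw [hc]
    linear_combination
      (-(((((∏ i, sp i : ℤ) : ℤ) : Lau n)) * N.det *
        ((((Equiv.Perm.sign τ : ℤ) : Lau n)) * (((Equiv.Perm.sign τ : ℤ) : Lau n))))) * hQ +
      (-((((∏ i, sp i : ℤ) : ℤ) : Lau n)) * N.det) * hS
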